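/- Let A = ℂ[X_1^{±1},…,X_N^{±1}, p_1,…,p_N]^{S_N} with the Poisson bracket determined by {p_j, X_i} = δ_{ij} X_i, {X_i,X_j} = 0 = {p_i,p_j}. Then A is generated as a Poisson algebra by ℂ[X_1^{±1},…,X_N^{±1}]^{S_N} together with H_0 = ∑_i p_i². In particular, F_{r,s} := ∑_i X_i^r p_i^s lies in the Poisson subalgebra generated by these elements, via F_{r,s} = (1/2r){H_0, F_{r,s−1}} for r ≠ 0 and F_{0,s} = (1/(s+1)){F_{−1,s+1}, F_{1,0}}. -/

import Mathlib

/- STATEMENT 7: Let A = ℂ[X_1^{±1},…,X_N^{±1}, p_1,…,p_N]^{S_N} with the Poisson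
bracket determined by {p_j, X_i} = δ_{ij}X_i, {X_i,X_j} = 0 = {p_i,p_j}.
Then A is generated as a Poisson algebra by ℂ[X^{±1}]^{S_N} (generated by the
power sums ∑_i X_i^r, r ∈ ℤ) together with H_0 = ∑_i p_i².

Model: L = the algebra with basis the monomials X^a p^b, a : Fin N → ℤ,
b : Fin N → ℕ, with the Poisson bracket given on monomials by
{X^a p^b, X^c p^d} = ∑_i (b_i c_i − a_i d_i) X^{a+c} p^{b+d−e_i};
S_N acts by permuting the variables.  The claim: every S_N-invariant element of
L lies in any subalgebra closed under the bracket which contains H_0 and all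
power sums ∑_i X_i^r (r ∈ ℤ). -/

noncomputable section

variable (N : ℕ)

abbrev PoisAlg (N : ℕ) := AddMonoidAlgebra ℂ ((Fin N → ℤ) × (Fin N → ℕ))

/-- Poisson bracket of two monomials -/
noncomputable def brMono {N : ℕ} (m₁ m₂ : (Fin N → ℤ) × (Fin N → ℕ)) : PoisAlg N :=
  ∑ i : Fin N,
    (((m₁.2 i : ℤ) * m₂.1 i - m₁.1 i * (m₂.2 i : ℤ) : ℤ) : ℂ) •
      (AddMonoidAlgebra.single (m₁.1 + m₂.1, m₁.2 + m₂.2 - Pi.single i 1) (1 : ℂ) : PoisAlg N)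

/-- the Poisson bracket on L, extended bilinearly from monomials -/
noncomputable def pbr {N : ℕ} : PoisAlg N →ₗ[ℂ] PoisAlg N →ₗ[ℂ] PoisAlg N :=
  (Finsupp.lsum ℂ (fun m₁ => LinearMap.toSpanSingleton ℂ _
    ((Finsupp.lsum ℂ (fun m₂ => LinearMap.toSpanSingleton ℂ (PoisAlg N) (brMono m₁ m₂))) ∘ₗ
      (AddMonoidAlgebra.coeffLinearEquiv ℂ).toLinearMap))) ∘ₗ
    (AddMonoidAlgebra.coeffLinearEquiv ℂ).toLinearMap

/-- the power sum ∑_i X_i^r, r ∈ ℤ -/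
noncomputable def psum {N : ℕ} (r : ℤ) : PoisAlg N :=
  ∑ i : Fin N, (AddMonoidAlgebra.single ((Pi.single i r : Fin N → ℤ), (0 : Fin N → ℕ)) (1 : ℂ) : PoisAlg N)

/-- H_0 = ∑_i p_i² -/
noncomputable def H0 {N : ℕ} : PoisAlg N :=
  ∑ i : Fin N, (AddMonoidAlgebra.single ((0 : Fin N → ℤ), (Pi.single i 2 : Fin N → ℕ)) (1 : ℂ) : PoisAlg N)

/-- the action of a permutation σ ∈ S_N on L -/
noncomputable def permAct {N : ℕ} (σ : Equiv.Perm (Fin N)) : PoisAlg N →ₗ[ℂ] PoisAlg N :=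
  AddMonoidAlgebra.mapDomainLinearMap ℂ ℂ (fun m : (Fin N → ℤ) × (Fin N → ℕ) => (fun j => m.1 (σ.symm j), fun j => m.2 (σ.symm j)))

/-
The bracket of the power sums `F r s = ∑ᵢ Xᵢ^r pᵢ^s` closes up:
`{F a b, F c d} = (b c - a d) F (a + c) (b + d - 1)`. Hence bracketing with `H₀ = F 0 2` raises
`s` whenever `r ≠ 0`, and `{F (-1) (s + 1), F 1 0} = (s + 1) F 0 s`, so every `F r s` lies in `B`.
The invariants are spanned by the orbit sums of monomials. If `m` vanishes at `i`, then
`F r s * orbitSum m` is a positive multiple of the orbit sum of `m` with `Xᵢ^r pᵢ^s` added, plus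
orbit sums of monomials supported on the support of `m`. Induction on the support then puts every
orbit sum in `B` (this is Weyl's theorem for multisymmetric functions, which needs characteristic 0).
-/

namespace PoisAlg

open AddMonoidAlgebra Equiv

-- the exponent `(a, b)` of the monomial `X^a p^b`
abbrev Exp (N : ℕ) := (Fin N → ℤ) × (Fin N → ℕ)

variable {N : ℕ}

def mono (i : Fin N) (r : ℤ) (s : ℕ) : Exp N := (Pi.single i r, Pi.single i s)

def F (r : ℤ) (s : ℕ) : PoisAlg N := ∑ i, single (mono i r s) 1

lemma psum_eq_F (r : ℤ) : psum r = (F r 0 : PoisAlg N) := by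
  simp [psum, F, mono]

lemma H0_eq_F : (H0 : PoisAlg N) = F 0 2 := by
  simp [H0, F, mono]

lemma pbr_single_single (m₁ m₂ : Exp N) : pbr (single m₁ 1) (single m₂ 1) = brMono m₁ m₂ := by
  simp [pbr]

lemma brMono_mono_mono (j i : Fin N) (a c : ℤ) (b d : ℕ) :
    brMono (mono j a b) (mono i c d) =
      if j = i then (((b : ℤ) * c - a * d : ℤ) : ℂ) • single (mono i (a + c) (b + d - 1)) 1
      else 0 := by
  rw [brMono, Finset.sum_eq_single i (fun k _ hk => by simp [mono, hk]) (by simp)]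
  split_ifs with h
  · subst h
    congr 2
    · simp [mono]
    · ext k <;> by_cases hk : k = j <;> simp [mono, hk]
  · simp [mono, Ne.symm h]

lemma pbr_F_F (a c : ℤ) (b d : ℕ) :
    pbr (F a b) (F c d) = (((b : ℤ) * c - a * d : ℤ) : ℂ) • (F (a + c) (b + d - 1) : PoisAlg N) := by
  simp only [F, map_sum, LinearMap.sum_apply, pbr_single_single, brMono_mono_mono,
    Finset.sum_ite_eq', Finset.mem_univ, if_true, Finset.smul_sum]

def permExp (σ : Perm (Fin N)) (m : Exp N) : Exp N :=
  (fun j => m.1 (σ.symm j), fun j => m.2 (σ.symm j))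

lemma permAct_single (σ : Perm (Fin N)) (m : Exp N) (c : ℂ) :
    permAct σ (single m c) = single (permExp σ m) c :=
  mapDomainLinearMap_single ..

lemma permExp_add (σ : Perm (Fin N)) (m n : Exp N) :
    permExp σ (m + n) = permExp σ m + permExp σ n := rfl

lemma permExp_mono (σ : Perm (Fin N)) (i : Fin N) (r : ℤ) (s : ℕ) :
    permExp σ (mono i r s) = mono (σ i) r s := by
  ext j <;> simp [permExp, mono, Pi.single_apply, symm_apply_eq]

def orbitSum (m : Exp N) : PoisAlg N := ∑ σ : Perm (Fin N), single (permExp σ m) 1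

lemma orbitSum_permExp (π : Perm (Fin N)) (m : Exp N) : orbitSum (permExp π m) = orbitSum m :=
  Fintype.sum_equiv (Equiv.mulRight π) _ _ fun _ => rfl

lemma F_mul_orbitSum (r : ℤ) (s : ℕ) (m : Exp N) :
    (F r s : PoisAlg N) * orbitSum m = ∑ j, orbitSum (m + mono j r s) := by
  simp only [F, orbitSum, Finset.sum_mul_sum, single_mul_single, one_mul, permExp_add,
    permExp_mono]
  rw [Finset.sum_comm]
  conv_rhs => rw [Finset.sum_comm]
  exact Finset.sum_congr rfl fun σ _ =>
    (Fintype.sum_equiv σ _ _ fun j => by rw [add_comm]).symm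

def expSupport (m : Exp N) : Finset (Fin N) := Finset.univ.filter fun i => m.1 i ≠ 0 ∨ m.2 i ≠ 0

@[simp]
lemma mem_expSupport {m : Exp N} {i : Fin N} : i ∈ expSupport m ↔ m.1 i ≠ 0 ∨ m.2 i ≠ 0 := by
  simp [expSupport]

lemma permExp_swap_of_eq {m : Exp N} {i j : Fin N} (h₁ : m.1 i = m.1 j) (h₂ : m.2 i = m.2 j) :
    permExp (swap i j) m = m := by
  ext k <;> simp only [permExp, symm_swap]
  exacts [apply_swap_eq_self h₁ k, apply_swap_eq_self h₂ k]

lemma expSupport_add_mono_subset {m : Exp N} {j : Fin N} (hj : j ∈ expSupport m) (r : ℤ) (s : ℕ) :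
    expSupport (m + mono j r s) ⊆ expSupport m := by
  intro k hk
  rcases eq_or_ne k j with rfl | hkj
  · exact hj
  · simpa [mono, hkj] using hk

lemma F_mul_orbitSum_of_notMem {m : Exp N} {i : Fin N} (hi : i ∉ expSupport m) (r : ℤ) (s : ℕ) :
    (F r s : PoisAlg N) * orbitSum m =
      ((expSupport m)ᶜ.card : ℂ) • orbitSum (m + mono i r s) +
        ∑ j ∈ expSupport m, orbitSum (m + mono j r s) := by
  rw [F_mul_orbitSum, ← Finset.sum_compl_add_sum (expSupport m)]
  congr 1
  have hswap : ∀ j ∈ (expSupport m)ᶜ, orbitSum (m + mono j r s) = orbitSum (m + mono i r s) := by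
    intro j hj
    have hvanish : ∀ k ∉ expSupport m, m.1 k = 0 ∧ m.2 k = 0 := by simp
    obtain ⟨hi₁, hi₂⟩ := hvanish i hi
    obtain ⟨hj₁, hj₂⟩ := hvanish j (Finset.mem_compl.mp hj)
    rw [← orbitSum_permExp (swap i j), permExp_add, permExp_mono, swap_apply_right,
      permExp_swap_of_eq (hi₁.trans hj₁.symm) (hi₂.trans hj₂.symm)]
  rw [Finset.sum_congr rfl hswap, Finset.sum_const, Nat.cast_smul_eq_nsmul]

def eraseAt (m : Exp N) (i : Fin N) : Exp N :=
  (Function.update m.1 i 0, Function.update m.2 i 0)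

lemma eraseAt_add_mono (m : Exp N) (i : Fin N) : eraseAt m i + mono i (m.1 i) (m.2 i) = m := by
  ext k <;> by_cases hk : k = i <;> simp [eraseAt, mono, hk]

lemma expSupport_eraseAt (m : Exp N) (i : Fin N) :
    expSupport (eraseAt m i) = (expSupport m).erase i := by
  ext k; by_cases hk : k = i <;> simp [eraseAt, hk]

lemma mem_span_orbitSum_of_invariant (a : PoisAlg N) (ha : ∀ σ : Perm (Fin N), permAct σ a = a) :
    a ∈ Submodule.span ℂ (Set.range orbitSum) := by
  have hcard : (Fintype.card (Perm (Fin N)) : ℂ) ≠ 0 := Nat.cast_ne_zero.mpr Fintype.card_ne_zero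
  have hpermAct : ∀ σ : Perm (Fin N),
      permAct σ a = ∑ m ∈ a.coeff.support, single (permExp σ m) (a.coeff m) := by
    intro σ
    conv_lhs => rw [← sum_coeff_single a]
    simp only [Finsupp.sum, map_sum, permAct_single]
  have hsum : (Fintype.card (Perm (Fin N)) : ℂ) • a = ∑ m ∈ a.coeff.support, a.coeff m • orbitSum m :=
    calc (Fintype.card (Perm (Fin N)) : ℂ) • a
        = ∑ σ : Perm (Fin N), permAct σ a := by
          simp only [ha, Finset.sum_const, Finset.card_univ, Nat.cast_smul_eq_nsmul]
      _ = ∑ m ∈ a.coeff.support, a.coeff m • orbitSum m := by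
          simp only [hpermAct, orbitSum, Finset.smul_sum, smul_single', mul_one]
          exact Finset.sum_comm
  rw [← inv_smul_smul₀ hcard a, hsum]
  exact Submodule.smul_mem _ _
    (Submodule.sum_mem _ fun m _ => Submodule.smul_mem _ _ (Submodule.subset_span ⟨m, rfl⟩))

section

variable {B : Subalgebra ℂ (PoisAlg N)}

lemma F_mem_of_ne_zero (hbr : ∀ a b : PoisAlg N, a ∈ B → b ∈ B → pbr a b ∈ B)
    (hps : ∀ r : ℤ, psum r ∈ B) (hH0 : H0 ∈ B) {r : ℤ} (hr : r ≠ 0) (s : ℕ) : F r s ∈ B := by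
  induction s with
  | zero => simpa only [psum_eq_F] using hps r
  | succ s ih =>
    have hbracket : pbr (F 0 2) (F r s) = ((2 * r : ℤ) : ℂ) • (F r (s + 1) : PoisAlg N) := by
      rw [pbr_F_F, zero_add, zero_mul, sub_zero, Nat.cast_two, add_comm 2 s]
      rfl
    have h2r : ((2 * r : ℤ) : ℂ) ≠ 0 := by exact_mod_cast mul_ne_zero two_ne_zero hr
    rw [← inv_smul_smul₀ h2r (F r (s + 1) : PoisAlg N), ← hbracket]
    exact B.smul_mem (hbr _ _ (H0_eq_F ▸ hH0) ih) _

lemma F_mem (hbr : ∀ a b : PoisAlg N, a ∈ B → b ∈ B → pbr a b ∈ B)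
    (hps : ∀ r : ℤ, psum r ∈ B) (hH0 : H0 ∈ B) (r : ℤ) (s : ℕ) : F r s ∈ B := by
  rcases eq_or_ne r 0 with rfl | hr
  · have hbracket : pbr (F (-1) (s + 1)) (F 1 0) = ((s : ℂ) + 1) • (F 0 s : PoisAlg N) := by
      rw [pbr_F_F]; norm_num
    have hs : ((s : ℂ) + 1) ≠ 0 := s.cast_add_one_ne_zero
    rw [← inv_smul_smul₀ hs (F 0 s : PoisAlg N), ← hbracket]
    exact B.smul_mem (hbr _ _ (F_mem_of_ne_zero hbr hps hH0 (by norm_num) _)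
      (F_mem_of_ne_zero hbr hps hH0 one_ne_zero _)) _
  · exact F_mem_of_ne_zero hbr hps hH0 hr s

lemma orbitSum_mem (hbr : ∀ a b : PoisAlg N, a ∈ B → b ∈ B → pbr a b ∈ B)
    (hps : ∀ r : ℤ, psum r ∈ B) (hH0 : H0 ∈ B) (m : Exp N) : orbitSum m ∈ B := by
  suffices h : ∀ t : Finset (Fin N), ∀ m : Exp N, expSupport m ⊆ t → orbitSum m ∈ B from
    h _ m subset_rfl
  intro t
  induction t using Finset.induction_on with
  | empty =>
    intro m hm
    have hm0 : m = 0 := by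
      have hk : ∀ k, m.1 k = 0 ∧ m.2 k = 0 := fun k => by
        simpa using fun hk => Finset.notMem_empty k (hm hk)
      ext k
      exacts [(hk k).1, (hk k).2]
    subst hm0
    refine B.sum_mem fun σ _ => ?_
    rw [show permExp σ 0 = 0 from rfl, ← AddMonoidAlgebra.one_def]
    exact B.one_mem
  | insert i t _ ih =>
    intro m hm
    have hm' : expSupport (eraseAt m i) ⊆ t := by
      rwa [expSupport_eraseAt, ← Finset.subset_insert_iff]
    have hi : i ∉ expSupport (eraseAt m i) := by simp [expSupport_eraseAt]
    have hcard : (((expSupport (eraseAt m i))ᶜ.card : ℕ) : ℂ) ≠ 0 :=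
      Nat.cast_ne_zero.mpr (Finset.card_ne_zero.mpr ⟨i, Finset.mem_compl.mpr hi⟩)
    have key := F_mul_orbitSum_of_notMem hi (m.1 i) (m.2 i)
    rw [eraseAt_add_mono] at key
    rw [← inv_smul_smul₀ hcard (orbitSum m), eq_sub_of_add_eq key.symm]
    refine B.smul_mem (B.sub_mem (B.mul_mem (F_mem hbr hps hH0 _ _) (ih _ hm')) ?_) _
    exact B.sum_mem fun j hj => ih _ ((expSupport_add_mono_subset hj _ _).trans hm')

end

end PoisAlg

theorem statement7 :
    ∀ B : Subalgebra ℂ (PoisAlg N),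
      (∀ a b : PoisAlg N, a ∈ B → b ∈ B → pbr a b ∈ B) →
      (∀ r : ℤ, psum r ∈ B) → H0 ∈ B →
      ∀ a : PoisAlg N, (∀ σ : Equiv.Perm (Fin N), permAct σ a = a) → a ∈ B := by
  intro B hbr hps hH0 a ha
  have hspan : Submodule.span ℂ (Set.range PoisAlg.orbitSum) ≤ Subalgebra.toSubmodule B :=
    Submodule.span_le.mpr (Set.range_subset_iff.mpr (PoisAlg.orbitSum_mem hbr hps hH0))
  exact hspan (PoisAlg.mem_span_orbitSum_of_invariant a ha)

end
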